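/- arXiv:2308.04751 — 3 statements merged into one kernel-verified Lean document; each statement's English description precedes it below -/
import Mathlib

section
/- For every integer m ≥ 2, the sum of 1/(2 - ξ - ξ̄) over all primitive m-th roots of unity ξ equals (1/12)·∑_{r | m} μ(m/r)·r², where μ is the Möbius function and ξ̄ denotes the complex conjugate of ξ. -/
/-!
For an `n`-th root of unity `ξ ≠ 1` one has `(1 - ξ) ∑_{k<n} k ξ^k = -n`, so `1/(1 - ξ)` is the
polynomial `-(1/n) ∑ k ξ^k` in `ξ`, and `1/(2 - ξ - ξ⁻¹) = -ξ/(1 - ξ)^2 = -ξ (∑ k ξ^k)^2 / n^2`.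
Summing over all `n`-th roots of unity, orthogonality `∑_ξ ξ^t = n [n ∣ t]` keeps only the
pairs `j + k + 1 = n`, giving `n ∑_j j (n - 1 - j) = n^2 (n - 1)(n - 2)/6`; removing the term
`ξ = 1` yields `∑_{ξ^n = 1, ξ ≠ 1} 1/(2 - ξ - ξ⁻¹) = (n^2 - 1)/12`. Grouping the roots by their
order and applying Möbius inversion gives the sum over the primitive `m`-th roots, the constant
`-1/12` disappearing because `∑_{r ∣ m} μ(m/r) = 0` for `m ≠ 1`.
-/

open Finset Polynomial ArithmeticFunction
open scoped ArithmeticFunction.Moebius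

section Sums

variable {R : Type*} [CommRing R]

theorem one_sub_mul_sum_range_cast_mul_pow (x : R) (n : ℕ) :
    (1 - x) * ∑ k ∈ range n, (k : R) * x ^ k = x * ∑ k ∈ range n, x ^ k - n * x ^ n := by
  induction n with
  | zero => simp
  | succ n ih => rw [sum_range_succ, sum_range_succ, mul_add, ih]; push_cast; ring

theorem two_mul_sum_range_cast (n : ℕ) : 2 * ∑ j ∈ range n, (j : R) = n * (n - 1) := by
  induction n with
  | zero => simp
  | succ n ih => rw [sum_range_succ, mul_add, ih]; push_cast; ring

theorem six_mul_sum_range_cast_mul_sub (n : ℕ) :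
    6 * ∑ j ∈ range n, (j : R) * (n - 1 - j) = n * (n - 1) * (n - 2) := by
  induction n with
  | zero => simp
  | succ n ih =>
    have hsplit : ∑ j ∈ range n, (j : R) * ((n + 1 : ℕ) - 1 - j)
        = ∑ j ∈ range n, (j : R) * (n - 1 - j) + ∑ j ∈ range n, (j : R) := by
      rw [← sum_add_distrib]
      exact sum_congr rfl fun j _ => by push_cast; ring
    rw [sum_range_succ, hsplit]
    push_cast
    linear_combination ih + 3 * two_mul_sum_range_cast (R := R) n

end Sums

section RootsOfUnity

variable {R : Type*} [CommRing R] [IsDomain R] {ζ : R} {n : ℕ}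

theorem one_sub_mul_sum_range_cast_mul_pow_of_pow_eq_one {ξ : R} (hξ : ξ ^ n = 1)
    (hξ1 : ξ ≠ 1) :
    (1 - ξ) * ∑ k ∈ range n, (k : R) * ξ ^ k = -n := by
  have hgeom : ∑ k ∈ range n, ξ ^ k = 0 := by
    refine (mul_eq_zero.1 ?_).resolve_right (sub_ne_zero.2 hξ1)
    rw [geom_sum_mul, hξ, sub_self]
  rw [one_sub_mul_sum_range_cast_mul_pow, hgeom, hξ]
  ring

variable [NeZero n]

theorem IsPrimitiveRoot.sum_nthRootsFinset_one_eq_sum_range {M : Type*} [AddCommMonoid M]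
    (hζ : IsPrimitiveRoot ζ n) (f : R → M) :
    ∑ ξ ∈ nthRootsFinset n (1 : R), f ξ = ∑ i ∈ range n, f (ζ ^ i) := by
  refine (sum_nbij (ζ ^ ·) (fun i _ => ?_) hζ.injOn_pow (fun ξ hξ => ?_) fun _ _ => rfl).symm
  · rw [Polynomial.mem_nthRootsFinset (NeZero.pos n), ← pow_mul, mul_comm, pow_mul,
      hζ.pow_eq_one, one_pow]
  · rw [mem_coe, Polynomial.mem_nthRootsFinset (NeZero.pos n)] at hξ
    obtain ⟨i, hi, rfl⟩ := hζ.eq_pow_of_pow_eq_one hξ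
    exact ⟨i, mem_range.2 hi, rfl⟩

theorem IsPrimitiveRoot.sum_nthRootsFinset_one_pow (hζ : IsPrimitiveRoot ζ n) (t : ℕ) :
    ∑ ξ ∈ nthRootsFinset n (1 : R), ξ ^ t = if n ∣ t then (n : R) else 0 := by
  rw [hζ.sum_nthRootsFinset_one_eq_sum_range]
  simp_rw [← pow_mul, mul_comm _ t, pow_mul]
  split_ifs with h
  · simp [(hζ.pow_eq_one_iff_dvd t).2 h]
  · have hne : ζ ^ t - 1 ≠ 0 := sub_ne_zero.2 fun h1 => h ((hζ.pow_eq_one_iff_dvd t).1 h1)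
    refine (mul_eq_zero.1 ?_).resolve_right hne
    rw [geom_sum_mul, ← pow_mul, mul_comm, pow_mul, hζ.pow_eq_one, one_pow, sub_self]

theorem IsPrimitiveRoot.sum_nthRootsFinset_one_mul_sq (hζ : IsPrimitiveRoot ζ n) :
    ∑ ξ ∈ nthRootsFinset n (1 : R), ξ * (∑ k ∈ range n, (k : R) * ξ ^ k) ^ 2
      = n * ∑ j ∈ range n, (j : R) * (n - 1 - j) := by
  have hexpand (ξ : R) : ξ * (∑ k ∈ range n, (k : R) * ξ ^ k) ^ 2
      = ∑ j ∈ range n, ∑ k ∈ range n, (j : R) * k * ξ ^ (j + k + 1) := by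
    rw [sq, sum_mul_sum, mul_sum]
    exact sum_congr rfl fun j _ => by rw [mul_sum]; exact sum_congr rfl fun k _ => by ring
  have hdvd {j k : ℕ} (hj : j < n) (hk : k < n) : n ∣ j + k + 1 ↔ k = n - 1 - j := by
    refine ⟨fun h => ?_, fun h => ⟨1, by omega⟩⟩
    have := Nat.eq_of_dvd_of_lt_two_mul (by omega) h (by omega)
    omega
  simp_rw [hexpand]
  rw [sum_comm, mul_sum]
  refine sum_congr rfl fun j hj => ?_
  rw [mem_range] at hj
  rw [sum_comm]
  calc ∑ k ∈ range n, ∑ ξ ∈ nthRootsFinset n (1 : R), (j : R) * k * ξ ^ (j + k + 1)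
      = ∑ k ∈ range n, if k = n - 1 - j then (j : R) * k * n else 0 := by
        refine sum_congr rfl fun k hk => ?_
        rw [← mul_sum, hζ.sum_nthRootsFinset_one_pow, mul_ite, mul_zero]
        exact if_congr (hdvd hj (mem_range.1 hk)) rfl rfl
    _ = n * (j * (n - 1 - j)) := by
        rw [sum_ite_eq' _ _ _, if_pos (mem_range.2 (by omega)), Nat.sub_sub,
          Nat.cast_sub (by omega : 1 + j ≤ n)]
        push_cast
        ring

end RootsOfUnity

section Field

variable {K : Type*} [Field K]

theorem one_div_two_sub_sub_inv_of_pow_eq_one {ξ : K} {n : ℕ} (hξ : ξ ^ n = 1) (hξ1 : ξ ≠ 1)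
    (hn : (n : K) ≠ 0) :
    1 / (2 - ξ - ξ⁻¹) = -(ξ * (∑ k ∈ range n, (k : K) * ξ ^ k) ^ 2) / n ^ 2 := by
  have hS := one_sub_mul_sum_range_cast_mul_pow_of_pow_eq_one hξ hξ1
  have hξ0 : ξ ≠ 0 := by
    rintro rfl
    exact zero_ne_one (by rwa [zero_pow (by rintro rfl; simp at hn)] at hξ)
  have h1ξ : 1 - ξ ≠ 0 := sub_ne_zero.2 hξ1.symm
  have hden : 2 - ξ - ξ⁻¹ = -(1 - ξ) ^ 2 / ξ := by field_simp; ring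
  rw [hden, div_eq_div_iff (div_ne_zero (neg_ne_zero.2 (pow_ne_zero 2 h1ξ)) hξ0)
    (pow_ne_zero 2 hn)]
  field_simp
  linear_combination (-(1 - ξ) * (∑ k ∈ range n, (k : K) * ξ ^ k) + n) * hS

/-- The summand at `ξ = 1` is the junk value `1 / 0 = 0`, matching `n ^ 2 - 1 = 0` for `n = 1`. -/
theorem IsPrimitiveRoot.twelve_mul_sum_nthRootsFinset_one_div_two_sub_sub_inv {ζ : K} {n : ℕ}
    [NeZero n] (hζ : IsPrimitiveRoot ζ n) :
    12 * ∑ ξ ∈ nthRootsFinset n (1 : K), 1 / (2 - ξ - ξ⁻¹) = n ^ 2 - 1 := by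
  classical
  have hn : (n : K) ≠ 0 := hζ.neZero'.out
  set S : K → K := fun ξ => ∑ k ∈ range n, (k : K) * ξ ^ k
  have h1 : (1 : K) ∈ nthRootsFinset n (1 : K) := one_mem_nthRootsFinset (NeZero.pos n)
  have hterms : ∑ ξ ∈ nthRootsFinset n (1 : K), 1 / (2 - ξ - ξ⁻¹)
      = ∑ ξ ∈ (nthRootsFinset n (1 : K)).erase 1, -(ξ * S ξ ^ 2) / n ^ 2 := by
    rw [← sum_erase (f := fun ξ : K => 1 / (2 - ξ - ξ⁻¹)) (a := 1) _ (by norm_num)]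
    refine sum_congr rfl fun ξ hξ => one_div_two_sub_sub_inv_of_pow_eq_one ?_
      (ne_of_mem_erase hξ) hn
    exact (Polynomial.mem_nthRootsFinset (NeZero.pos n) 1).1 (mem_of_mem_erase hξ)
  have hS1 : 2 * S 1 = n * (n - 1) := by simpa [S] using two_mul_sum_range_cast (R := K) n
  have hT := six_mul_sum_range_cast_mul_sub (R := K) n
  rw [hterms, sum_erase_eq_sub h1, ← sum_div, sum_neg_distrib, hζ.sum_nthRootsFinset_one_mul_sq]
  field_simp
  linear_combination (-2 * n) * hT + 3 * (2 * S 1 + n * (n - 1)) * hS1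

end Field

theorem sum_divisors_sum_primitiveRoots {R M : Type*} [CommRing R] [IsDomain R] [AddCommMonoid M]
    (n : ℕ) (f : R → M) :
    ∑ d ∈ n.divisors, ∑ ξ ∈ primitiveRoots d R, f ξ
      = ∑ ξ ∈ nthRootsFinset n (1 : R), f ξ := by
  classical
  rw [IsPrimitiveRoot.nthRoots_one_eq_biUnion_primitiveRoots,
    sum_biUnion fun i _ j _ hij => IsPrimitiveRoot.disjoint hij]

theorem Complex.twelve_mul_sum_nthRootsFinset_one_div_two_sub_sub_conj (n : ℕ) [NeZero n] :
    12 * ∑ ξ ∈ nthRootsFinset n (1 : ℂ), 1 / (2 - ξ - starRingEnd ℂ ξ) = n ^ 2 - 1 := by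
  have hζ := Complex.isPrimitiveRoot_exp n (NeZero.ne n)
  rw [← hζ.twelve_mul_sum_nthRootsFinset_one_div_two_sub_sub_inv]
  congr 1
  refine sum_congr rfl fun ξ hξ => ?_
  rw [Complex.inv_eq_conj (Complex.norm_eq_one_of_pow_eq_one
    ((Polynomial.mem_nthRootsFinset (NeZero.pos n) 1).1 hξ) (NeZero.ne n))]

theorem sum_divisors_moebius_div_eq_zero {R : Type*} [Ring R] {m : ℕ} (hm : m ≠ 1) :
    ∑ r ∈ m.divisors, (μ (m / r) : R) = 0 := by
  simp_rw [Nat.sum_div_divisors m (fun d => (μ d : R)), ← intCoe_apply, ← coe_mul_zeta_apply,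
    coe_moebius_mul_coe_zeta, one_apply_ne hm]

theorem stmt_2 (m : ℕ) (hm : 2 ≤ m) :
    ∑ ξ ∈ primitiveRoots m ℂ, 1 / (2 - ξ - (starRingEnd ℂ) ξ)
      = (1 / 12 : ℂ) *
        ((∑ r ∈ m.divisors, (ArithmeticFunction.moebius (m / r)) * (r : ℤ) ^ 2 : ℤ) : ℂ) := by
  have hdiv : ∀ n : ℕ, 0 < n →
      ∑ d ∈ n.divisors, ∑ ξ ∈ primitiveRoots d ℂ, 1 / (2 - ξ - starRingEnd ℂ ξ)
        = ((n : ℂ) ^ 2 - 1) / 12 := by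
    intro n hn
    have : NeZero n := NeZero.of_pos hn
    rw [sum_divisors_sum_primitiveRoots, eq_div_iff (by norm_num), mul_comm,
      Complex.twelve_mul_sum_nthRootsFinset_one_div_two_sub_sub_conj]
  have hinv := sum_eq_iff_sum_mul_moebius_eq.1 hdiv m (by omega)
  rw [Nat.sum_divisorsAntidiagonal' (f := fun a b => (μ a : ℂ) * (((b : ℂ) ^ 2 - 1) / 12))]
    at hinv
  calc _ = ∑ r ∈ m.divisors, (μ (m / r) : ℂ) * (((r : ℂ) ^ 2 - 1) / 12) := hinv.symm
    _ = 1 / 12 * ∑ r ∈ m.divisors, (μ (m / r) : ℂ) * (r : ℂ) ^ 2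
        - 1 / 12 * ∑ r ∈ m.divisors, (μ (m / r) : ℂ) := by
      rw [mul_sum, mul_sum, ← sum_sub_distrib]
      exact sum_congr rfl fun r _ => by ring
    _ = _ := by
      rw [sum_divisors_moebius_div_eq_zero (by omega)]
      push_cast
      ring
end

section
/- Let T_n denote the Chebyshev polynomials of the first kind. For every positive integer s, the polynomial a(x) := (T_{s+1}(x) - T_s(x))/(x-1) satisfies a'(1) = s(s+1)(2s+1)/3. -/
open Polynomial Polynomial.Chebyshev

noncomputable def aa : ℕ → ℝ[X]
  | 0 => 1
  | n + 1 => (2 * X - 1) * aa n + 2 * T ℝ n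

lemma aa_spec (n : ℕ) : T ℝ (n + 1) - T ℝ n = (X - 1) * aa n := by
  induction n with
  | zero => simp [aa, T_zero, T_one]
  | succ n ih =>
    have h : T ℝ ((n : ℤ) + 2) = 2 * X * T ℝ (n + 1) - T ℝ n := T_add_two ℝ n
    push_cast
    rw [show ((n : ℤ) + 1 + 1) = (n : ℤ) + 2 by ring, h, aa]
    push_cast at ih
    linear_combination (2 * (X:ℝ[X]) - 1) * ih

lemma T_eval_one' (n : ℕ) : (T ℝ n).eval 1 = 1 := by
  induction n using Nat.twoStepInduction with
  | zero => simp [T_zero]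
  | one => simp [T_one]
  | more n ih1 ih2 =>
    have h : T ℝ ((n : ℤ) + 2) = 2 * X * T ℝ (n + 1) - T ℝ n := T_add_two ℝ n
    push_cast
    rw [h]
    push_cast at ih1 ih2
    simp [ih1, ih2]
    norm_num

lemma U_eval_one' (n : ℕ) : (U ℝ n).eval 1 = n + 1 := by
  induction n using Nat.twoStepInduction with
  | zero => simp [U_zero]
  | one => simp [U_one]; norm_num
  | more n ih1 ih2 =>
    have h : U ℝ ((n : ℤ) + 2) = 2 * X * U ℝ (n + 1) - U ℝ n := U_add_two ℝ n
    push_cast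
    rw [h]
    push_cast at ih1 ih2
    simp [ih1, ih2]
    ring

lemma aa_eval_one (n : ℕ) : (aa n).eval 1 = 2 * n + 1 := by
  induction n with
  | zero => simp [aa]
  | succ n ih =>
    have hT : (T ℝ n).eval 1 = 1 := T_eval_one' n
    simp [aa, ih, hT]
    push_cast; ring

lemma dT_eval_one (n : ℕ) : (Polynomial.derivative (T ℝ n)).eval 1 = n ^ 2 := by
  rw [T_derivative_eq_U]
  rcases Nat.eq_zero_or_pos n with h | h
  · simp [h]
  · have e : ((n : ℤ) - 1) = ((n - 1 : ℕ) : ℤ) := by omega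
    rw [e]
    simp [U_eval_one']
    push_cast [Nat.cast_sub h]
    ring

lemma daa_eval_one (n : ℕ) :
    (Polynomial.derivative (aa n)).eval 1 = n * (n + 1) * (2 * n + 1) / 3 := by
  induction n with
  | zero => simp [aa]
  | succ n ih =>
    have h1 := aa_eval_one n
    have h2 := dT_eval_one n
    simp only [aa, derivative_add, derivative_mul, derivative_sub, derivative_one,
      Polynomial.derivative_X, derivative_ofNat, derivative_mul]
    simp [h1, h2, ih]
    push_cast
    field_simp
    ring

theorem stmt_5 (s : ℕ) (hs : 0 < s) :
    ∃ a : ℝ[X],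
      T ℝ (s + 1) - T ℝ s = (X - 1) * a ∧
        (Polynomial.derivative a).eval 1 = s * (s + 1) * (2 * s + 1) / 3 := by
  exact ⟨aa s, aa_spec s, daa_eval_one s⟩
end

section
/- The number of labeled trees on n vertices (equivalently, the number of good generating sets of the symmetric group S_n, i.e., sets of n-1 transpositions generating S_n) is n^{n-2}. -/
/-!
If `S` consists of transpositions, the subgroup it generates moves each point only inside its
connected component of the graph with an edge `{x, y}` for each `swap x y ∈ S`, and conversely
a path from `x` to `y` writes `swap x y` as a product of elements of `S`. So `S`
generates `Sₙ` iff this graph is connected, and with `n - 1` edges this means it is a tree.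

Trees on a vertex set `s` are counted by Prüfer's bijection with lists of `#s - 2` elements of `s`:
a list `a :: l` decodes to the edge from `v`, the least vertex of `s` not occurring in `a :: l`,
to `a`, together with the decoding of `l` on `s \ {v}`. A vertex then has degree one more than
its number of occurrences in the list, so `v` is the least leaf of the decoded tree. Hence the
tree determines its code, and every tree arises by deleting its least leaf and recursing.
-/

namespace LabeledTree

open Finset Relation Equiv

variable {α : Type*}

def Reach (E : Finset (Sym2 α)) : α → α → Prop :=
  ReflTransGen fun x y => s(x, y) ∈ E

section Reach

variable {E E' : Finset (Sym2 α)} {x y z : α}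

lemma Reach.refl (E : Finset (Sym2 α)) (x : α) : Reach E x x := ReflTransGen.refl

lemma Reach.single (h : s(x, y) ∈ E) : Reach E x y := ReflTransGen.single h

lemma Reach.trans (h : Reach E x y) (h' : Reach E y z) : Reach E x z := ReflTransGen.trans h h'

lemma Reach.symm (h : Reach E x y) : Reach E y x := by
  have : Std.Symm fun x y : α => s(x, y) ∈ E := ⟨fun _ _ h => Sym2.eq_swap ▸ h⟩
  exact Std.Symm.symm (r := ReflTransGen _) _ _ h

lemma Reach.mono (hE : E ⊆ E') (h : Reach E x y) : Reach E' x y :=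
  ReflTransGen.mono (r := fun x y => s(x, y) ∈ E) (fun _ _ he => hE he) _ _ h

end Reach

structure IsTreeOn (s : Finset α) (E : Finset (Sym2 α)) : Prop where
  subset_sym2 : E ⊆ s.sym2
  not_isDiag : ∀ e ∈ E, ¬e.IsDiag
  card_add_one : #E + 1 = #s
  reach : ∀ x ∈ s, ∀ y ∈ s, Reach E x y

lemma IsTreeOn.mem_of_mem {s : Finset α} {E : Finset (Sym2 α)} (ht : IsTreeOn s E) {e : Sym2 α}
    {v : α} (he : e ∈ E) (hv : v ∈ e) : v ∈ s :=
  mem_sym2_iff.mp (ht.subset_sym2 he) v hv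

lemma isTreeOn_singleton (x : α) : IsTreeOn {x} ∅ where
  subset_sym2 := empty_subset _
  not_isDiag := by simp
  card_add_one := by simp
  reach := by
    simp only [mem_singleton]
    rintro _ rfl _ rfl
    exact Reach.refl _ _

lemma IsTreeOn.eq_empty_of_singleton {x : α} {E : Finset (Sym2 α)} (ht : IsTreeOn {x} E) :
    E = ∅ :=
  card_eq_zero.mp (by simpa using ht.card_add_one)

lemma mk_notMem_of_subset_sym2 {s : Finset α} {E : Finset (Sym2 α)} (hE : E ⊆ s.sym2) {v : α}
    (hv : v ∉ s) (a : α) : s(v, a) ∉ E :=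
  fun h => hv (mk_mem_sym2_iff.mp (hE h)).1

section Degree

variable [DecidableEq α] {s : Finset α} {E : Finset (Sym2 α)} {e : Sym2 α} {v a : α}

def deg (E : Finset (Sym2 α)) (v : α) : ℕ := #{e ∈ E | v ∈ e}

lemma deg_insert (he : e ∉ E) (w : α) :
    deg (insert e E) w = deg E w + if w ∈ e then 1 else 0 := by
  unfold deg
  rw [filter_insert]
  split_ifs
  · exact card_insert_of_notMem fun h => he (mem_filter.mp h).1
  · rfl

lemma deg_eq_zero_of_notMem (hE : E ⊆ s.sym2) (hv : v ∉ s) : deg E v = 0 := by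
  rw [deg, card_eq_zero, filter_eq_empty_iff]
  exact fun e he hve => hv (mem_sym2_iff.mp (hE he) v hve)

lemma deg_eq_one_iff : deg E v = 1 ↔ ∃ a, {e ∈ E | v ∈ e} = {s(v, a)} := by
  rw [deg, card_eq_one]
  constructor
  · rintro ⟨e, he⟩
    have hve : e ∈ {e ∈ E | v ∈ e} := he ▸ mem_singleton_self e
    obtain ⟨a, rfl⟩ := Sym2.mem_iff_exists.mp (mem_filter.mp hve).2
    exact ⟨a, he⟩
  · rintro ⟨a, h⟩
    exact ⟨_, h⟩

lemma sum_deg (hE : E ⊆ s.sym2) (hd : ∀ e ∈ E, ¬e.IsDiag) :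
    ∑ v ∈ s, deg E v = 2 * #E := by
  have hbelow : ∀ e ∈ E, #(bipartiteBelow (· ∈ ·) s e) = 2 := by
    intro e he
    rw [← Sym2.card_toFinset_of_not_isDiag e (hd e he)]
    congr 1
    ext v
    simpa [bipartiteBelow] using fun hv => mem_sym2_iff.mp (hE he) v hv
  rw [mul_comm, ← smul_eq_mul, ← sum_const, ← sum_congr rfl hbelow,
    ← sum_card_bipartiteAbove_eq_sum_card_bipartiteBelow]
  rfl

namespace IsTreeOn

lemma deg_pos (ht : IsTreeOn s E) (h2 : 2 ≤ #s) (hv : v ∈ s) : 0 < deg E v := by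
  obtain ⟨w, hw, hwv⟩ := exists_mem_ne h2 v
  obtain ⟨z, hz, -⟩ := TransGen.head'_iff.mp
    ((reflTransGen_iff_eq_or_transGen.mp (ht.reach v hv w hw)).resolve_left hwv)
  exact card_pos.mpr ⟨s(v, z), mem_filter.mpr ⟨hz, Sym2.mem_mk_left v z⟩⟩

lemma exists_deg_eq_one (ht : IsTreeOn s E) (h2 : 2 ≤ #s) : ∃ v ∈ s, deg E v = 1 := by
  by_contra! h
  have hsum : ∑ _v ∈ s, 2 ≤ ∑ v ∈ s, deg E v :=
    sum_le_sum fun v hv => by have := ht.deg_pos h2 hv; have := h v hv; omega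
  rw [sum_const, smul_eq_mul, sum_deg ht.subset_sym2 ht.not_isDiag] at hsum
  have := ht.card_add_one
  omega

lemma erase_leaf (ht : IsTreeOn s E) (hleaf : {e ∈ E | v ∈ e} = {s(v, a)}) :
    IsTreeOn (s.erase v) (E.erase s(v, a)) := by
  have hinc : ∀ e ∈ E, v ∈ e → e = s(v, a) := fun e he hve =>
    mem_singleton.mp (hleaf ▸ mem_filter.mpr ⟨he, hve⟩)
  have hva : s(v, a) ∈ E := (mem_filter.mp (hleaf ▸ mem_singleton_self _)).1
  have hv : v ∈ s := ht.mem_of_mem hva (Sym2.mem_mk_left v a)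
  have hav : a ≠ v := fun h => ht.not_isDiag _ hva (by simp [h])
  refine ⟨?_, fun e he => ht.not_isDiag e (mem_of_mem_erase he), ?_, ?_⟩
  · intro e he
    obtain ⟨hne, heE⟩ := mem_erase.mp he
    exact mem_sym2_iff.mpr fun w hw =>
      mem_erase.mpr ⟨by rintro rfl; exact hne (hinc e heE hw), ht.mem_of_mem heE hw⟩
  · have := ht.card_add_one
    rw [card_erase_of_mem hva, card_erase_of_mem hv, ← this, Nat.sub_add_cancel]
    · simp
    · exact card_pos.mpr ⟨_, hva⟩
  -- contracting the leaf edge onto `a` turns walks in `E` into walks avoiding `v`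
  · let f : α → α := fun w => if w = v then a else w
    have hf : ∀ b c, s(b, c) ∈ E → Reach (E.erase s(v, a)) (f b) (f c) := by
      intro b c hbc
      by_cases h : s(b, c) = s(v, a)
      · rcases Sym2.eq_iff.mp h with ⟨rfl, rfl⟩ | ⟨rfl, rfl⟩ <;> simp [f, Reach.refl]
      · have hb : b ≠ v := fun hb => h (hinc _ hbc (hb ▸ Sym2.mem_mk_left b c))
        have hc : c ≠ v := fun hc => h (hinc _ hbc (hc ▸ Sym2.mem_mk_right b c))
        simpa only [f, if_neg hb, if_neg hc] using Reach.single (mem_erase.mpr ⟨h, hbc⟩)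
    intro x hx y hy
    have := ReflTransGen.lift' f hf _ _ (ht.reach x (mem_of_mem_erase hx) y (mem_of_mem_erase hy))
    simp only [Function.onFun, f, if_neg (ne_of_mem_erase hx), if_neg (ne_of_mem_erase hy)] at this
    exact this

lemma insert_leaf (ht : IsTreeOn (s.erase v) E) (hv : v ∈ s) (ha : a ∈ s.erase v) :
    IsTreeOn s (insert s(v, a) E) := by
  have hreach : ∀ x ∈ s, Reach (insert s(v, a) E) x a := by
    intro x hx
    by_cases hxv : x = v
    · exact hxv ▸ Reach.single (mem_insert_self _ _)
    · exact (ht.reach x (mem_erase.mpr ⟨hxv, hx⟩) a ha).mono (subset_insert _ _)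
  refine ⟨?_, ?_, ?_, fun x hx y hy => (hreach x hx).trans (hreach y hy).symm⟩
  · rw [insert_subset_iff, mk_mem_sym2_iff]
    exact ⟨⟨hv, mem_of_mem_erase ha⟩, ht.subset_sym2.trans (sym2_mono (erase_subset v s))⟩
  · simpa [Sym2.mk_isDiag_iff, (ne_of_mem_erase ha).symm] using ht.not_isDiag
  · rw [card_insert_of_notMem (mk_notMem_of_subset_sym2 ht.subset_sym2 (notMem_erase v s) a),
      ht.card_add_one, card_erase_add_one hv]

end IsTreeOn

end Degree

def pruferCodes (s : Finset α) : Set (List α) :=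
  {l | (∀ x ∈ l, x ∈ s) ∧ l.length + 2 = #s}

lemma ncard_lists_of_length (s : Finset α) (k : ℕ) :
    {l : List α | (∀ x ∈ l, x ∈ s) ∧ l.length = k}.ncard = #s ^ k := by
  have : {l : List α | (∀ x ∈ l, x ∈ s) ∧ l.length = k} =
      List.ofFn '' (Fintype.piFinset fun _ : Fin k => s : Set (Fin k → α)) := by
    ext l
    simp only [Set.mem_ofPred_eq, Set.mem_image, mem_coe, Fintype.mem_piFinset]
    constructor
    · rintro ⟨hl, rfl⟩
      exact ⟨fun i => l[i], fun i => hl _ (List.getElem_mem _), List.ofFn_getElem⟩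
    · rintro ⟨f, hf, rfl⟩
      simpa [List.mem_ofFn] using hf
  rw [this, List.ofFn_injective.injOn.ncard_image, Set.ncard_coe_finset, Fintype.card_piFinset,
    prod_const, card_univ, Fintype.card_fin]

lemma ncard_pruferCodes {s : Finset α} (h2 : 2 ≤ #s) :
    (pruferCodes s).ncard = #s ^ (#s - 2) := by
  rw [← ncard_lists_of_length s]
  congr 1
  ext l
  exact and_congr_right fun _ => by omega

lemma cons_mem_pruferCodes [DecidableEq α] {s : Finset α} {l : List α} {v a : α}
    (hl : l ∈ pruferCodes (s.erase v)) (hv : v ∈ s) (ha : a ∈ s.erase v) :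
    a :: l ∈ pruferCodes s := by
  refine ⟨?_, ?_⟩
  · rintro x (_ | ⟨_, hx⟩)
    · exact mem_of_mem_erase ha
    · exact mem_of_mem_erase (hl.1 x hx)
  · have := hl.2
    rw [card_erase_of_mem hv] at this
    simp only [List.length_cons]
    omega

section Prufer

variable [LinearOrder α] {s : Finset α} {E : Finset (Sym2 α)} {l : List α} {v a : α}

def pruferDecode (s : Finset α) : List α → Finset (Sym2 α)
  | [] => {e ∈ s.sym2 | ¬e.IsDiag}
  | a :: l =>
    if h : (s \ (a :: l).toFinset).Nonempty then
      let v := (s \ (a :: l).toFinset).min' h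
      insert s(v, a) (pruferDecode (s.erase v) l)
    else ∅ -- unreachable on `pruferCodes s`

lemma filter_not_isDiag_sym2_pair {x y : α} (hxy : x ≠ y) :
    {e ∈ ({x, y} : Finset α).sym2 | ¬e.IsDiag} = {s(x, y)} := by
  ext e
  induction e using Sym2.ind with
  | _ a b =>
    simp only [mem_filter, mk_mem_sym2_iff, mem_insert, mem_singleton, Sym2.mk_isDiag_iff,
      Sym2.eq_iff]
    aesop

lemma isTreeOn_pair {x y : α} (hxy : x ≠ y) : IsTreeOn {x, y} {s(x, y)} := by
  have h : ({x, y} : Finset α).erase x = {y} := erase_insert (by simpa using hxy)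
  have hy : IsTreeOn (({x, y} : Finset α).erase x) ∅ := by rw [h]; exact isTreeOn_singleton y
  simpa using hy.insert_leaf (mem_insert_self x {y}) (by simp [h])

lemma pruferDecode_cons_spec (hl : a :: l ∈ pruferCodes s) :
    ∃ v, IsLeast ↑(s \ (a :: l).toFinset) v ∧ l ∈ pruferCodes (s.erase v) ∧
      a ∈ s.erase v ∧
      pruferDecode s (a :: l) = insert s(v, a) (pruferDecode (s.erase v) l) := by
  have hne : (s \ (a :: l).toFinset).Nonempty := by
    rw [sdiff_nonempty]
    intro h
    have := (card_le_card h).trans (List.toFinset_card_le _)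
    have := hl.2
    simp only [List.length_cons] at *
    omega
  have hv := isLeast_min' _ hne
  obtain ⟨hvs, hvl⟩ := mem_sdiff.mp hv.1
  rw [List.mem_toFinset, List.mem_cons, not_or] at hvl
  refine ⟨_, hv, ⟨fun x hx => mem_erase.mpr ⟨?_, hl.1 x (List.mem_cons_of_mem a hx)⟩, ?_⟩,
    mem_erase.mpr ⟨Ne.symm hvl.1, hl.1 a List.mem_cons_self⟩,
    by rw [pruferDecode, dif_pos hne]⟩
  · rintro rfl; exact hvl.2 hx
  · have := hl.2
    rw [card_erase_of_mem hvs]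
    simp only [List.length_cons] at *
    omega

theorem isTreeOn_pruferDecode (hl : l ∈ pruferCodes s) : IsTreeOn s (pruferDecode s l) := by
  induction l generalizing s with
  | nil =>
    obtain ⟨x, y, hxy, rfl⟩ := card_eq_two.mp hl.2.symm
    rw [pruferDecode, filter_not_isDiag_sym2_pair hxy]
    exact isTreeOn_pair hxy
  | cons a l ih =>
    obtain ⟨v, hv, hl', ha, hdecode⟩ := pruferDecode_cons_spec hl
    rw [hdecode]
    exact (ih hl').insert_leaf (mem_sdiff.mp hv.1).1 ha

lemma deg_insert_leaf (hE : E ⊆ (s.erase v).sym2)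
    (hdeg : ∀ w ∈ s.erase v, deg E w = l.count w + 1) (hv : v ∉ a :: l) :
    ∀ w ∈ s, deg (insert s(v, a) E) w = (a :: l).count w + 1 := by
  intro w hw
  rw [deg_insert (mk_notMem_of_subset_sym2 hE (notMem_erase v s) a)]
  by_cases hwv : w = v
  · subst hwv
    rw [deg_eq_zero_of_notMem hE (notMem_erase w s), List.count_eq_zero_of_not_mem hv]
    simp
  · rw [hdeg w (mem_erase.mpr ⟨hwv, hw⟩)]
    rcases eq_or_ne w a with rfl | hwa
    · simp
    · simp [hwv, hwa, hwa.symm]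

theorem deg_pruferDecode (hl : l ∈ pruferCodes s) :
    ∀ w ∈ s, deg (pruferDecode s l) w = l.count w + 1 := by
  induction l generalizing s with
  | nil =>
    obtain ⟨x, y, hxy, rfl⟩ := card_eq_two.mp hl.2.symm
    rw [pruferDecode, filter_not_isDiag_sym2_pair hxy]
    intro w hw
    simp only [mem_insert, mem_singleton] at hw
    rcases hw with rfl | rfl <;> simp [deg, filter_singleton]
  | cons a l ih =>
    obtain ⟨v, hv, hl', -, hdecode⟩ := pruferDecode_cons_spec hl
    rw [hdecode]
    exact deg_insert_leaf (isTreeOn_pruferDecode hl').subset_sym2 (ih hl')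
      (by simpa using (mem_sdiff.mp hv.1).2)

lemma filter_deg_eq_one (hdeg : ∀ w ∈ s, deg E w = l.count w + 1) :
    {w ∈ s | deg E w = 1} = s \ l.toFinset := by
  ext w
  simp only [mem_filter, mem_sdiff, List.mem_toFinset, and_congr_right_iff]
  intro hw
  rw [hdeg w hw, ← List.count_eq_zero]
  omega

theorem pruferDecode_injOn (s : Finset α) : Set.InjOn (pruferDecode s) (pruferCodes s) := by
  intro l₁ hl₁ l₂ hl₂ h
  induction l₁ generalizing s l₂ with
  | nil =>
    cases l₂ with
    | nil => rfl
    | cons => exact absurd (hl₁.2.trans hl₂.2.symm) (by simp)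
  | cons a l₁ ih =>
    cases l₂ with
    | nil => exact absurd (hl₁.2.trans hl₂.2.symm) (by simp)
    | cons b l₂ =>
      obtain ⟨v, hv, hl₁', -, h₁⟩ := pruferDecode_cons_spec hl₁
      obtain ⟨w, hw, hl₂', -, h₂⟩ := pruferDecode_cons_spec hl₂
      have hleaves : s \ (a :: l₁).toFinset = s \ (b :: l₂).toFinset := by
        rw [← filter_deg_eq_one (deg_pruferDecode hl₁),
          ← filter_deg_eq_one (deg_pruferDecode hl₂), h]
      obtain rfl : v = w := hv.unique (hleaves ▸ hw)
      have hnew : ∀ {l}, l ∈ pruferCodes (s.erase v) → ∀ c,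
          s(v, c) ∉ pruferDecode (s.erase v) l := fun hl =>
        mk_notMem_of_subset_sym2 (isTreeOn_pruferDecode hl).subset_sym2 (notMem_erase v s)
      rw [h₁, h₂] at h
      obtain rfl : a = b := by
        have := h ▸ mem_insert_self s(v, a) (pruferDecode (s.erase v) l₁)
        rcases mem_insert.mp this with hab | hab
        · exact Sym2.congr_right.mp hab
        · exact absurd hab (hnew hl₂' a)
      have := congrArg (·.erase s(v, a)) h
      simp only [erase_insert (hnew hl₁' a), erase_insert (hnew hl₂' a)] at this
      rw [ih _ hl₁' hl₂' this]

lemma pruferDecode_cons_of_isLeast (hl : l ∈ pruferCodes (s.erase v)) (hvs : v ∈ s)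
    (ha : a ∈ s.erase v)
    (hv : IsLeast ↑{w ∈ s | deg (insert s(v, a) (pruferDecode (s.erase v) l)) w = 1} v) :
    a :: l ∈ pruferCodes s ∧
      pruferDecode s (a :: l) = insert s(v, a) (pruferDecode (s.erase v) l) := by
  have hvl : v ∉ a :: l := by
    rintro (_ | ⟨_, hvl⟩)
    · exact notMem_erase v s ha
    · exact notMem_erase v s (hl.1 v hvl)
  have hcode := cons_mem_pruferCodes hl hvs ha
  rw [filter_deg_eq_one (deg_insert_leaf (isTreeOn_pruferDecode hl).subset_sym2
    (deg_pruferDecode hl) hvl)] at hv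
  obtain ⟨w, hw, -, -, hdecode⟩ := pruferDecode_cons_spec hcode
  obtain rfl : w = v := hw.unique hv
  exact ⟨hcode, hdecode⟩

theorem exists_pruferDecode_eq (ht : IsTreeOn s E) (h2 : 2 ≤ #s) :
    ∃ l ∈ pruferCodes s, pruferDecode s l = E := by
  obtain ⟨k, hk⟩ := Nat.exists_eq_add_of_le' h2
  induction k generalizing s E with
  | zero =>
    obtain ⟨x, y, hxy, rfl⟩ := card_eq_two.mp hk
    refine ⟨[], ⟨by simp, by simp [hk]⟩, (eq_of_subset_of_card_le ?_ ?_).symm⟩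
    · exact fun e he => mem_filter.mpr ⟨ht.subset_sym2 he, ht.not_isDiag e he⟩
    · have := ht.card_add_one
      rw [pruferDecode, filter_not_isDiag_sym2_pair hxy, card_singleton]
      rw [card_pair hxy] at this
      omega
  | succ k ih =>
    have hleaves : {v ∈ s | deg E v = 1}.Nonempty := by
      obtain ⟨v, hv, hdeg⟩ := ht.exists_deg_eq_one h2
      exact ⟨v, mem_filter.mpr ⟨hv, hdeg⟩⟩
    have hv := isLeast_min' _ hleaves
    set v := min' _ hleaves
    obtain ⟨hvs, hvdeg⟩ := mem_filter.mp hv.1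
    obtain ⟨a, hleaf⟩ := deg_eq_one_iff.mp hvdeg
    have hva : s(v, a) ∈ E := (mem_filter.mp (hleaf ▸ mem_singleton_self _)).1
    have ha : a ∈ s.erase v :=
      mem_erase.mpr ⟨fun h => ht.not_isDiag _ hva (by simp [h]), ht.mem_of_mem hva (by simp)⟩
    obtain ⟨l, hl, hdecode⟩ := ih (ht.erase_leaf hleaf) (by rw [card_erase_of_mem hvs]; omega)
      (by rw [card_erase_of_mem hvs]; omega)
    have hE : E = insert s(v, a) (pruferDecode (s.erase v) l) := by
      rw [hdecode, insert_erase hva]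
    rw [hE] at hv
    obtain ⟨hcode, hdecode'⟩ := pruferDecode_cons_of_isLeast hl hvs ha hv
    exact ⟨a :: l, hcode, hdecode'.trans hE.symm⟩

theorem ncard_isTreeOn (hs : s.Nonempty) : {E | IsTreeOn s E}.ncard = #s ^ (#s - 2) := by
  obtain h1 | h2 : #s = 1 ∨ 2 ≤ #s := by have := hs.card_pos; omega
  · obtain ⟨x, rfl⟩ := card_eq_one.mp h1
    have : {E | IsTreeOn {x} E} = {∅} :=
      Set.ext fun E =>
        ⟨IsTreeOn.eq_empty_of_singleton, by rintro rfl; exact isTreeOn_singleton x⟩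
    simp [this]
  · have : {E | IsTreeOn s E} = pruferDecode s '' pruferCodes s :=
      Set.ext fun E => ⟨fun ht => exists_pruferDecode_eq ht h2,
        by rintro ⟨l, hl, rfl⟩; exact isTreeOn_pruferDecode hl⟩
    rw [this, (pruferDecode_injOn s).ncard_image, ncard_pruferCodes h2]

end Prufer

section Swaps

variable [DecidableEq α]

def toSwap : Sym2 α → Perm α := Sym2.lift ⟨swap, swap_comm⟩

@[simp] lemma toSwap_mk (a b : α) : toSwap s(a, b) = swap a b := rfl

lemma isSwap_toSwap {e : Sym2 α} (he : ¬e.IsDiag) : (toSwap e).IsSwap := by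
  induction e using Sym2.ind with
  | _ a b => exact ⟨a, b, he, rfl⟩

lemma toSwap_injOn : Set.InjOn toSwap {e : Sym2 α | ¬e.IsDiag} := by
  intro e₁ he₁ e₂ he₂ h
  induction e₁ using Sym2.ind with | _ a b =>
  induction e₂ using Sym2.ind with | _ c d =>
  have hab : a ≠ b := he₁
  have := Equiv.congr_fun h a
  simp only [toSwap_mk, swap_apply_left, swap_apply_def] at this
  split_ifs at this with hac had
  · subst hac this; rfl
  · subst had this; exact Sym2.eq_swap
  · exact absurd this.symm hab

lemma reach_apply_of_mem_closure {E : Finset (Sym2 α)} {σ : Perm α}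
    (hσ : σ ∈ Subgroup.closure (toSwap '' (E : Set (Sym2 α)))) (x : α) :
    Reach E (σ x) x := by
  induction hσ using Subgroup.closure_induction generalizing x with
  | mem τ hτ =>
    obtain ⟨e, he, rfl⟩ := hτ
    induction e using Sym2.ind with | _ a b =>
    rw [toSwap_mk, swap_apply_def]
    split_ifs with hxa hxb
    · exact hxa ▸ (Reach.single he).symm
    · exact hxb ▸ Reach.single he
    · exact Reach.refl E x
  | one => exact Reach.refl E x
  | mul σ τ _ _ hσ hτ => exact (hσ (τ x)).trans (hτ x)
  | inv σ _ hσ => simpa using (hσ (σ⁻¹ x)).symm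

lemma swap_mem_closure_of_reach {E : Finset (Sym2 α)} {x y : α} (h : Reach E x y) :
    swap x y ∈ Subgroup.closure (toSwap '' (E : Set (Sym2 α))) := by
  induction h with
  | refl => rw [swap_self]; exact Subgroup.one_mem _
  | tail _ hyz ih =>
    exact SubmonoidClass.swap_mem_trans _ ih
      (Subgroup.subset_closure (Set.mem_image_of_mem toSwap hyz))

lemma closure_image_toSwap_eq_top_iff [Finite α] {E : Finset (Sym2 α)} :
    Subgroup.closure (toSwap '' (E : Set (Sym2 α))) = ⊤ ↔ ∀ x y, Reach E x y := by
  refine ⟨fun h x y => ?_, fun h => ?_⟩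
  · have := reach_apply_of_mem_closure (h ▸ Subgroup.mem_top (swap x y)) y
    rwa [swap_apply_right] at this
  · rw [eq_top_iff, ← Perm.closure_isSwap, Subgroup.closure_le]
    rintro _ ⟨x, y, -, rfl⟩
    exact swap_mem_closure_of_reach (h x y)

variable [Fintype α]

lemma image_toSwap_injOn :
    Set.InjOn (image toSwap) {E : Finset (Sym2 α) | ∀ e ∈ E, ¬e.IsDiag} := by
  suffices ∀ E₁ E₂ : Finset (Sym2 α), (∀ e ∈ E₁, ¬e.IsDiag) →
      (∀ e ∈ E₂, ¬e.IsDiag) → E₁.image toSwap = E₂.image toSwap → E₁ ⊆ E₂ from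
    fun E₁ h₁ E₂ h₂ h => (this _ _ h₁ h₂ h).antisymm (this _ _ h₂ h₁ h.symm)
  intro E₁ E₂ h₁ h₂ h e he
  obtain ⟨e', he', hee'⟩ := mem_image.mp (h ▸ mem_image_of_mem toSwap he)
  rwa [← toSwap_injOn (h₂ e' he') (h₁ e he) hee']

lemma card_image_toSwap {E : Finset (Sym2 α)} (hE : ∀ e ∈ E, ¬e.IsDiag) :
    #(E.image toSwap) = #E :=
  card_image_of_injOn (toSwap_injOn.mono hE)

lemma image_toSwap_filter {S : Finset (Perm α)} (hS : ∀ t ∈ S, t.IsSwap) :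
    ({e | ¬e.IsDiag ∧ toSwap e ∈ S} : Finset (Sym2 α)).image toSwap = S := by
  ext σ
  simp only [mem_image, mem_filter, mem_univ, true_and]
  refine ⟨fun ⟨e, ⟨_, he⟩, hσ⟩ => hσ ▸ he, fun hσ => ?_⟩
  obtain ⟨x, y, hxy, rfl⟩ := hS σ hσ
  exact ⟨s(x, y), ⟨hxy, hσ⟩, rfl⟩

lemma isTreeOn_univ_iff [Nonempty α] {E : Finset (Sym2 α)} (hE : ∀ e ∈ E, ¬e.IsDiag) :
    IsTreeOn univ E ↔ #(E.image toSwap) = Fintype.card α - 1 ∧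
      Subgroup.closure (toSwap '' (E : Set (Sym2 α))) = ⊤ := by
  rw [card_image_toSwap hE, closure_image_toSwap_eq_top_iff]
  have := Fintype.card_pos (α := α)
  refine ⟨fun ht => ⟨?_, fun x y => ht.reach x (mem_univ x) y (mem_univ y)⟩,
    fun ⟨hcard, hreach⟩ => ⟨?_, hE, ?_, fun x _ y _ => hreach x y⟩⟩
  · rw [← card_univ, ← ht.card_add_one, Nat.add_sub_cancel]
  · simp [sym2_univ]
  · rw [hcard, card_univ]
    omega

theorem ncard_generating_swaps [Nonempty α] :
    {S : Finset (Perm α) | #S = Fintype.card α - 1 ∧ (∀ t ∈ S, t.IsSwap) ∧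
      Subgroup.closure (S : Set (Perm α)) = ⊤}.ncard =
    {E : Finset (Sym2 α) | IsTreeOn univ E}.ncard := by
  rw [← image_toSwap_injOn.mono (fun E ht => ht.not_isDiag) |>.ncard_image]
  congr 1
  ext S
  constructor
  · rintro ⟨hcard, hS, hclosure⟩
    have hE : ∀ e ∈ ({e | ¬e.IsDiag ∧ toSwap e ∈ S} : Finset (Sym2 α)), ¬e.IsDiag :=
      fun e he => (mem_filter.mp he).2.1
    refine ⟨_, (isTreeOn_univ_iff hE).mpr ?_, image_toSwap_filter hS⟩
    rw [← coe_image, image_toSwap_filter hS]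
    exact ⟨hcard, hclosure⟩
  · rintro ⟨E, ht, rfl⟩
    obtain ⟨hcard, hclosure⟩ := (isTreeOn_univ_iff ht.not_isDiag).mp ht
    refine ⟨hcard, ?_, by rwa [coe_image]⟩
    simp only [mem_image]
    rintro _ ⟨e, he, rfl⟩
    exact isSwap_toSwap (ht.not_isDiag e he)

end Swaps

end LabeledTree

/-- The number of sets of `n - 1` transpositions generating the symmetric group `Sₙ`
(equivalently, by Cayley's formula, the number of labeled trees on `n` vertices)
is `n^(n-2)`. -/
theorem stmt_18 (n : ℕ) (hn : 0 < n) :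
    Nat.card {S : Finset (Equiv.Perm (Fin n)) //
        S.card = n - 1 ∧
        (∀ t ∈ S, t.IsSwap) ∧
        Subgroup.closure (S : Set (Equiv.Perm (Fin n))) = ⊤}
      = n ^ (n - 2) := by
  have : Nonempty (Fin n) := ⟨⟨0, hn⟩⟩
  have h := LabeledTree.ncard_generating_swaps (α := Fin n)
  rw [LabeledTree.ncard_isTreeOn Finset.univ_nonempty, Finset.card_univ, Fintype.card_fin] at h
  exact (Nat.card_coe_set_eq _).trans h
end
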